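/- Let A be a 2n×2n zero-one matrix, and let A^↕ be A flipped upside down (A^↕_{i,j} = A_{2n−i+1,j}). Then RB^{A^↕}(q,t) = q^{C(2n,2)} · t^n · RB^{A}(q^{−1}, t^{−1}), where C(2n,2) = 2n(2n−1)/2, as an identity of Laurent polynomials in q and t. -/

import Mathlib

open Finset

/-- A board: the set of one-entries (cells) of a zero-one matrix, as (row, column) pairs. -/
abbrev Board := Finset (ℕ × ℕ)

/-- The full `m × n` grid of cells. -/
def grid (m n : ℕ) : Board := Finset.range m ×ˢ Finset.range n

/-- The (non-taking) rook configurations on the board `A` with `k` rooks. -/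
def rookConfigs (A : Board) (k : ℕ) : Finset Board :=
  A.powerset.filter fun C =>
    C.card = k ∧ ∀ c ∈ C, ∀ c' ∈ C, c ≠ c' → c.1 ≠ c'.1 ∧ c.2 ≠ c'.2

/-- `invStat m n C`: the number of (not necessarily positive) cells of an `m × n` matrix
having no rook of the configuration `C` weakly to the right in the same row nor weakly
below in the same column. -/
def invStat (m n : ℕ) (C : Board) : ℕ :=
  ((grid m n).filter fun a =>
    (∀ c ∈ C, c.1 = a.1 → c.2 < a.2) ∧ (∀ c ∈ C, c.2 = a.2 → c.1 < a.1)).card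

/-- The `k`-th `q`-rook number of a board `A` of ambient matrix size `m × n`. -/
def qRook {F : Type*} [CommSemiring F] (q : F) (m n : ℕ) (A : Board) (k : ℕ) : F :=
  ∑ C ∈ rookConfigs A k, q ^ invStat m n C

/-- The `q`-analogue `[x]_q = 1 + q + ⋯ + q^(x-1)`. -/
def qInt {F : Type*} [CommSemiring F] (q : F) (x : ℕ) : F := ∑ i ∈ Finset.range x, q ^ i

/-- The `q`-factorial `[n]!_q = [1]_q [2]_q ⋯ [n]_q`. -/
def qFact {F : Type*} [CommSemiring F] (q : F) (n : ℕ) : F := ∏ i ∈ Finset.range n, qInt q (i + 1)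

/-- The `q`-Stirling numbers `S_{n,k}(q)` of Garsia and Remmel. -/
def qStirling {F : Type*} [CommSemiring F] (q : F) : ℕ → ℕ → F
  | 0, 0 => 1
  | 0, _ + 1 => 0
  | n + 1, k => (if k = 0 then 0 else q ^ (k - 1) * qStirling q n (k - 1)) + qInt q k * qStirling q n k

/-- Stirling numbers of the second kind. -/
def stirling2 : ℕ → ℕ → ℕ
  | 0, 0 => 1
  | 0, _ + 1 => 0
  | n + 1, k => (if k = 0 then 0 else stirling2 n (k - 1)) + k * stirling2 n k

/-- The board `A` covers the rook configuration of the permutation `π`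
(a rook at `(i, π i)` for every row `i`, zero-indexed). -/
def Covers {n : ℕ} (A : Board) (π : Equiv.Perm (Fin n)) : Prop :=
  ∀ i : Fin n, ((i : ℕ), (π i : ℕ)) ∈ A

/-- `bruhatRank π i j` is the number of rooks of `π` weakly north-east of cell `(i,j)`,
i.e. `|{a ≤ i : π a ≥ j}|`. -/
def bruhatRank {n : ℕ} (π : Equiv.Perm (Fin n)) (i j : Fin n) : ℕ :=
  (Finset.univ.filter fun a : Fin n => a ≤ i ∧ j ≤ π a).card

/-- Bruhat order on the symmetric group, via the standard (Ehresmann) rank criterion. -/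
def BruhatLE {n : ℕ} (u w : Equiv.Perm (Fin n)) : Prop :=
  ∀ i j : Fin n, bruhatRank u i j ≤ bruhatRank w i j


instance {n : ℕ} (A : Board) (π : Equiv.Perm (Fin n)) : Decidable (Covers A π) :=
  inferInstanceAs (Decidable (∀ i : Fin n, ((i : ℕ), (π i : ℕ)) ∈ A))

instance {n : ℕ} (u w : Equiv.Perm (Fin n)) : Decidable (BruhatLE u w) :=
  inferInstanceAs (Decidable (∀ i j : Fin n, bruhatRank u i j ≤ bruhatRank w i j))

/-- The number of inversions of a permutation (= its Coxeter length). -/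
def inversions {n : ℕ} (π : Equiv.Perm (Fin n)) : ℕ :=
  (Finset.univ.filter fun p : Fin n × Fin n => p.1 < p.2 ∧ π p.2 < π p.1).card

/-- A right-aligned Ferrers matrix inside the `n × n` grid: every one-entry has one-entries
(weakly) to its right in the grid and above it. -/
def IsRightFerrers (n : ℕ) (A : Board) : Prop :=
  A ⊆ grid n n ∧ ∀ i j i' j' : ℕ, (i, j) ∈ A → i' ≤ i → j ≤ j' → j' < n → (i', j') ∈ A

/-- A left-aligned Ferrers matrix inside the `n × n` grid. -/
def IsLeftFerrers (n : ℕ) (A : Board) : Prop :=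
  A ⊆ grid n n ∧ ∀ i j i' j' : ℕ, (i, j) ∈ A → i' ≤ i → j' ≤ j → (i', j') ∈ A

/-- A right-aligned skew Ferrers matrix: an entrywise difference `λ - μ` of right-aligned
Ferrers matrices with `μ ≤ λ`. -/
def IsRightSkewFerrers (n : ℕ) (B : Board) : Prop :=
  ∃ L M : Board, IsRightFerrers n L ∧ IsRightFerrers n M ∧ M ⊆ L ∧ B = L \ M

/-- A left-aligned skew Ferrers matrix. -/
def IsLeftSkewFerrers (n : ℕ) (B : Board) : Prop :=
  ∃ L M : Board, IsLeftFerrers n L ∧ IsLeftFerrers n M ∧ M ⊆ L ∧ B = L \ M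

/-- `H` is the right hull of `π`: the smallest right-aligned skew Ferrers matrix covering `π`. -/
def IsRightHull {n : ℕ} (π : Equiv.Perm (Fin n)) (H : Board) : Prop :=
  IsRightSkewFerrers n H ∧ Covers H π ∧
    ∀ B : Board, IsRightSkewFerrers n B → Covers B π → H ⊆ B

/-- `H` is the left hull of `π`: the smallest left-aligned skew Ferrers matrix covering `π`. -/
def IsLeftHull {n : ℕ} (π : Equiv.Perm (Fin n)) (H : Board) : Prop :=
  IsLeftSkewFerrers n H ∧ Covers H π ∧
    ∀ B : Board, IsLeftSkewFerrers n B → Covers B π → H ⊆ B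

/-- `π` contains the pattern `σ`. -/
def ContainsPattern {n m : ℕ} (π : Equiv.Perm (Fin n)) (σ : Equiv.Perm (Fin m)) : Prop :=
  ∃ f : Fin m → Fin n, StrictMono f ∧ ∀ a b : Fin m, σ a < σ b ↔ π (f a) < π (f b)

/-- The pattern 4231 (one-line notation, here zero-indexed). -/
def p4231 : Equiv.Perm (Fin 4) := ⟨![3,1,2,0], ![3,1,2,0], by decide, by decide⟩
/-- The pattern 35142. -/
def p35142 : Equiv.Perm (Fin 5) := ⟨![2,4,0,3,1], ![2,4,0,3,1], by decide, by decide⟩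
/-- The pattern 42513. -/
def p42513 : Equiv.Perm (Fin 5) := ⟨![3,1,4,0,2], ![3,1,4,0,2], by decide, by decide⟩
/-- The pattern 351624. -/
def p351624 : Equiv.Perm (Fin 6) := ⟨![2,4,0,5,1,3], ![2,4,0,5,1,3], by decide, by decide⟩

/-- `π` avoids the four patterns 4231, 35142, 42513 and 351624. -/
def AvoidsThePatterns {n : ℕ} (π : Equiv.Perm (Fin n)) : Prop :=
  ¬ ContainsPattern π p4231 ∧ ¬ ContainsPattern π p35142 ∧
    ¬ ContainsPattern π p42513 ∧ ¬ ContainsPattern π p351624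

/-- Rotating an `m × n` board by 180 degrees. -/
def rot180 (m n : ℕ) (A : Board) : Board := A.image fun c => (m - 1 - c.1, n - 1 - c.2)

/-- Flipping an `m`-row board upside down. -/
def flipud (m : ℕ) (A : Board) : Board := A.image fun c => (m - 1 - c.1, c.2)

/-- The block matrix `B # A` with `B` (of size `nB × nB`) in the top-left corner, `A`
(of size `mA × mA`) in the bottom-right corner, and all-ones off-diagonal blocks. -/
def blockSharp (nB mA : ℕ) (B A : Board) : Board :=
  B ∪ Finset.range nB ×ˢ Finset.Ico nB (nB + mA) ∪ Finset.Ico nB (nB + mA) ×ˢ Finset.range nB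
    ∪ A.image fun c => (c.1 + nB, c.2 + nB)

/-- The 180-degree rotation of a permutation of `Fin n`: `π^↻ (i) = n - 1 - π (n - 1 - i)`. -/
def rot180Perm {n : ℕ} (π : Equiv.Perm (Fin n)) : Equiv.Perm (Fin n) :=
  (Fin.revPerm.trans π).trans Fin.revPerm

/-- The statistic `neg(π) = |{i ∈ [n+1, 2n] : π i ≤ n}|` (one-indexed) on `S_{2n}`. -/
def negStat (n : ℕ) (π : Equiv.Perm (Fin (2 * n))) : ℕ :=
  (Finset.univ.filter fun i : Fin (2 * n) => n ≤ (i : ℕ) ∧ (π i : ℕ) < n).card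

/-- `RB^M (q, t) = Σ_{π ∈ 𝔖ₙᴮ ∩ 𝔖(M)} q^{inv π} t^{neg π}` over rotationally symmetric
permutations of `S_{2n}` covered by the `2n × 2n` board `M`. -/
def RB {F : Type*} [CommSemiring F] (q t : F) (n : ℕ) (M : Board) : F :=
  ∑ π ∈ Finset.univ.filter fun π : Equiv.Perm (Fin (2 * n)) => rot180Perm π = π ∧ Covers M π,
    q ^ inversions π * t ^ negStat n π

/-- The triangular board `T_m` with ones on and above the secondary diagonal. -/
def Tboard (m : ℕ) : Board := (grid m m).filter fun c => c.1 + c.2 < m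

/-- The field `ℚ(q,t)` of rational functions in two variables. -/
noncomputable abbrev QTfield := FractionRing (MvPolynomial (Fin 2) ℚ)
/-- The variable `q` in `ℚ(q,t)`. -/
noncomputable def qvar : QTfield := algebraMap (MvPolynomial (Fin 2) ℚ) _ (MvPolynomial.X 0)
/-- The variable `t` in `ℚ(q,t)`. -/
noncomputable def tvar : QTfield := algebraMap (MvPolynomial (Fin 2) ℚ) _ (MvPolynomial.X 1)

/-!
Precomposing with the reversal `rev i = 2n - 1 - i` maps the rotationally symmetric permutations
covered by `A^↕` bijectively onto those covered by `A`, since it commutes with the 180° rotation.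
It exchanges the inversions of `π` with its non-inversions, and the rows `i ≥ n` having `π i < n`
with the rows `i < n` having `π i < n`; as exactly `n` rows have `π i < n`, this gives
`inv (π ∘ rev) = C(2n,2) - inv π` and `neg (π ∘ rev) = n - neg π`.
-/

variable {m : ℕ}

lemma mul_revPerm_mul_revPerm (π : Equiv.Perm (Fin m)) :
    π * Fin.revPerm * Fin.revPerm = π := by
  ext i
  simp

lemma inversions_mul_revPerm_add (π : Equiv.Perm (Fin m)) :
    inversions (π * Fin.revPerm) + inversions π = m.choose 2 := by
  have hflip :
      inversions (π * Fin.revPerm) = #{p : Fin m × Fin m | p.1 < p.2 ∧ π p.1 < π p.2} := by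
    refine card_nbij' (fun p => (p.2.rev, p.1.rev)) (fun p => (p.2.rev, p.1.rev)) ?_ ?_ ?_ ?_ <;>
      intro p hp <;> simp_all [Fin.rev_lt_rev]
  have hsplit : #{p : Fin m × Fin m | p.1 < p.2 ∧ π p.1 < π p.2} + inversions π =
      #{p : Fin m × Fin m | p.1 < p.2} := by
    rw [inversions, ← card_union_of_disjoint]
    · congr 1
      ext p
      simp only [mem_union, mem_filter, mem_univ, true_and]
      constructor
      · rintro (h | h) <;> exact h.1
      · intro h
        rcases lt_or_gt_of_ne (π.injective.ne h.ne) with h' | h'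
        exacts [Or.inl ⟨h, h'⟩, Or.inr ⟨h, h'⟩]
    · exact disjoint_filter.mpr fun p _ h h' => lt_asymm h.2 h'.2
  rw [hflip, hsplit, Fintype.card_product_filter_lt, Fintype.card_fin]

lemma negStat_mul_revPerm_add (n : ℕ) (π : Equiv.Perm (Fin (2 * n))) :
    negStat n (π * Fin.revPerm) + negStat n π = n := by
  have hflip :
      negStat n (π * Fin.revPerm) = #{i : Fin (2 * n) | (i : ℕ) < n ∧ (π i : ℕ) < n} := by
    refine card_nbij' Fin.rev Fin.rev ?_ ?_ ?_ ?_ <;> intro i hi <;> simp_all <;> omega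
  have hsplit : #{i : Fin (2 * n) | (i : ℕ) < n ∧ (π i : ℕ) < n} + negStat n π =
      #{i : Fin (2 * n) | (π i : ℕ) < n} := by
    rw [negStat, ← card_union_of_disjoint]
    · congr 1
      ext i
      simp only [mem_union, mem_filter, mem_univ, true_and]
      omega
    · exact disjoint_filter.mpr fun i _ h h' => by omega
  have hcount : #{i : Fin (2 * n) | (π i : ℕ) < n} = n := by
    rw [card_nbij' π π.symm (t := {j : Fin (2 * n) | (j : ℕ) < n}) (fun i hi => by simpa using hi)
      (fun j hj => by simpa using hj) (fun i _ => by simp) (fun j _ => by simp),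
      Fin.card_filter_val_lt]
    omega
  rw [hflip, hsplit, hcount]

lemma rot180Perm_mul_revPerm (π : Equiv.Perm (Fin m)) :
    rot180Perm (π * Fin.revPerm) = rot180Perm π * Fin.revPerm := by
  ext i
  simp [rot180Perm]

lemma mem_flipud_iff {A : Board} (hA : A ⊆ grid m m) (i : Fin m) (j : ℕ) :
    ((i : ℕ), j) ∈ flipud m A ↔ ((i.rev : ℕ), j) ∈ A := by
  simp only [flipud, mem_image, Prod.mk.injEq, Fin.val_rev]
  constructor
  · rintro ⟨⟨a, b⟩, hab, ha, rfl⟩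
    have := (mem_product.mp (hA hab)).1
    rw [mem_range] at this
    convert hab using 2
    omega
  · intro h
    exact ⟨_, h, by omega, rfl⟩

lemma covers_flipud_iff {A : Board} (hA : A ⊆ grid m m) (π : Equiv.Perm (Fin m)) :
    Covers (flipud m A) π ↔ Covers A (π * Fin.revPerm) := by
  simp only [Covers, mem_flipud_iff hA]
  exact Fin.revPerm.forall_congr fun i => by simp

lemma pow_eq_pow_mul_inv_pow {G : Type*} [GroupWithZero G] {a : G} (ha : a ≠ 0) {k l s : ℕ}
    (h : l + k = s) : a ^ k = a ^ s * a⁻¹ ^ l := by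
  rw [← h, add_comm, pow_add, inv_pow, mul_inv_cancel_right₀ (pow_ne_zero l ha)]

theorem RB_flipud_eq {F : Type*} [Semifield F] {q t : F} (hq : q ≠ 0) (ht : t ≠ 0) (n : ℕ)
    {A : Board} (hA : A ⊆ grid (2 * n) (2 * n)) :
    RB q t n (flipud (2 * n) A) = q ^ (2 * n).choose 2 * t ^ n * RB q⁻¹ t⁻¹ n A := by
  rw [RB, RB, mul_sum]
  refine sum_nbij' (· * Fin.revPerm) (· * Fin.revPerm) ?_ ?_ (fun π _ => mul_revPerm_mul_revPerm π)
    (fun π _ => mul_revPerm_mul_revPerm π) fun π _ => ?_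
  · intro π hπ
    simp_all [rot180Perm_mul_revPerm, covers_flipud_iff hA]
  · intro π hπ
    simp_all [rot180Perm_mul_revPerm, covers_flipud_iff hA, mul_revPerm_mul_revPerm]
  · rw [pow_eq_pow_mul_inv_pow hq (inversions_mul_revPerm_add π),
      pow_eq_pow_mul_inv_pow ht (negStat_mul_revPerm_add n π)]
    ring

lemma qvar_ne_zero : qvar ≠ 0 := by
  simp [qvar, MvPolynomial.X_ne_zero]

lemma tvar_ne_zero : tvar ≠ 0 := by
  simp [tvar, MvPolynomial.X_ne_zero]

/-- For a `2n × 2n` board `A`,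
`RB^{A^↕}(q,t) = q^{C(2n,2)} t^n RB^A(q⁻¹, t⁻¹)`. -/
theorem RB_flipud (n : ℕ) (A : Board) (hA : A ⊆ grid (2 * n) (2 * n)) :
    RB qvar tvar n (flipud (2 * n) A) =
      qvar ^ ((2 * n).choose 2) * tvar ^ n * RB qvar⁻¹ tvar⁻¹ n A :=
  RB_flipud_eq qvar_ne_zero tvar_ne_zero n hA
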